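/- Let d ≥ 2, m ≥ 1, and let S = Σ_{k=1}^{d+1} |e_{mod(k,d+1)+1}⟩⟨e_k| be the cyclic shift on the first d+1 coordinates of ℂ^{d+m}. Then Σ_{i=1}^{d+1} Σ_{r,s=1}^{d} |e^d_s⟩⟨e^d_r| ⊗ |e^{d+m}_{mod(r+i−2,d+1)+1}⟩⟨e^{d+m}_{mod(s+i−2,d+1)+1}| is positive semidefinite, being equal to C C^† where C is the block column with blocks I, S^†, (S²)^†, ..., (S^d)^† when arranged as Σ_{r,s=1}^{d} |e^d_s⟩⟨e^d_r| ⊗ S^{mod(r−s−1,d+1)+1}. -/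

import Mathlib

/-!
Put `j = r + s + i` in `ℤ/(d+1)`. Then `(r + i, s + i) = (j - s, j - r)`, so the `(i, r, s)` summand
is the rank-one matrix `|e_s ⊗ e_{j-s}⟩⟨e_r ⊗ e_{j-r}|`, and for fixed `r, s` summing over `i` is
summing over `j`. Hence the whole sum is `∑_j |w_j⟩⟨w_j|` with `w_j = ∑_s e_s ⊗ e_{j-s}`, a sum of
positive semidefinite matrices.
-/

open Matrix Kronecker ComplexOrder

noncomputable def stdVec (n : ℕ) (j : ℕ) : Fin n → ℂ := fun a => if (a : ℕ) = j then 1 else 0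

noncomputable def outer {n : ℕ} (u v : Fin n → ℂ) : Matrix (Fin n) (Fin n) ℂ :=
  Matrix.of fun a b => u a * (starRingEnd ℂ) (v b)

namespace Matrix

variable {α β γ δ ι κ R : Type*}

theorem vecMulVec_kronecker_vecMulVec [CommSemiring R] (u : α → R) (v : β → R) (x : γ → R)
    (y : δ → R) :
    vecMulVec u v ⊗ₖ vecMulVec x y =
      vecMulVec (fun p : α × γ => u p.1 * x p.2) (fun q : β × δ => v q.1 * y q.2) := by
  ext ⟨a, c⟩ ⟨b, e⟩
  simp only [kroneckerMap_apply, vecMulVec_apply]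
  ring

theorem vecMulVec_sum_sum [NonUnitalNonAssocSemiring R] (s : Finset ι) (t : Finset κ)
    (u : ι → α → R) (v : κ → β → R) :
    vecMulVec (∑ i ∈ s, u i) (∑ k ∈ t, v k) = ∑ i ∈ s, ∑ k ∈ t, vecMulVec (u i) (v k) := by
  ext a b
  simp only [vecMulVec_apply, Finset.sum_apply, Matrix.sum_apply, Finset.sum_mul, Finset.mul_sum]
  exact Finset.sum_comm

end Matrix

theorem outer_eq_vecMulVec {n : ℕ} (u v : Fin n → ℂ) : outer u v = vecMulVec u (star v) := rfl

noncomputable def antidiagonalTerm (d m : ℕ) (j : Fin (d + 1)) (s : Fin d) :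
    Fin d × Fin (d + m) → ℂ :=
  fun p => stdVec d s p.1 * stdVec (d + m) (j - s.castSucc : Fin (d + 1)) p.2

noncomputable def antidiagonalVec (d m : ℕ) (j : Fin (d + 1)) : Fin d × Fin (d + m) → ℂ :=
  ∑ s, antidiagonalTerm d m j s

theorem outer_kronecker_outer_eq_vecMulVec_antidiagonalTerm (d m : ℕ) (i : Fin (d + 1))
    (r s : Fin d) :
    outer (stdVec d s) (stdVec d r) ⊗ₖ
        outer (stdVec (d + m) (((r : ℕ) + (i : ℕ)) % (d + 1)))
          (stdVec (d + m) (((s : ℕ) + (i : ℕ)) % (d + 1))) =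
      vecMulVec (antidiagonalTerm d m (r.castSucc + s.castSucc + i) s)
        (star (antidiagonalTerm d m (r.castSucc + s.castSucc + i) r)) := by
  have hr : r.castSucc + s.castSucc + i - s.castSucc = r.castSucc + i := by abel
  have hs : r.castSucc + s.castSucc + i - r.castSucc = s.castSucc + i := by abel
  rw [outer_eq_vecMulVec, outer_eq_vecMulVec, vecMulVec_kronecker_vecMulVec]
  congr 1 <;> funext p
  · simp only [antidiagonalTerm, hr, Fin.val_add, Fin.val_castSucc]
  · simp only [antidiagonalTerm, hs, Fin.val_add, Fin.val_castSucc, Pi.star_apply, star_mul']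

theorem sum_outer_kronecker_outer_eq_sum_vecMulVec_antidiagonalVec (d m : ℕ) :
    ∑ i : Fin (d + 1), ∑ r : Fin d, ∑ s : Fin d,
      outer (stdVec d s) (stdVec d r) ⊗ₖ
        outer (stdVec (d + m) (((r : ℕ) + (i : ℕ)) % (d + 1)))
          (stdVec (d + m) (((s : ℕ) + (i : ℕ)) % (d + 1))) =
      ∑ j, vecMulVec (antidiagonalVec d m j) (star (antidiagonalVec d m j)) := by
  simp only [outer_kronecker_outer_eq_vecMulVec_antidiagonalTerm, antidiagonalVec, star_sum,
    vecMulVec_sum_sum]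
  rw [Finset.sum_comm_cycle, Finset.sum_comm_cycle]
  conv_rhs => rw [Finset.sum_comm_cycle, Finset.sum_comm_cycle, Finset.sum_comm]
  refine Finset.sum_congr rfl fun r _ => Finset.sum_congr rfl fun s _ => ?_
  exact Equiv.sum_comp (Equiv.addLeft (r.castSucc + s.castSucc))
    fun j => vecMulVec (antidiagonalTerm d m j s) (star (antidiagonalTerm d m j r))

theorem stmt_14_general (d m : ℕ) :
    (∑ i : Fin (d + 1), ∑ r : Fin d, ∑ s : Fin d,
      (outer (stdVec d (s : ℕ)) (stdVec d (r : ℕ))) ⊗ₖ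
        (outer (stdVec (d + m) (((r : ℕ) + (i : ℕ)) % (d + 1)))
          (stdVec (d + m) (((s : ℕ) + (i : ℕ)) % (d + 1))))).PosSemidef := by
  rw [sum_outer_kronecker_outer_eq_sum_vecMulVec_antidiagonalVec]
  exact posSemidef_sum _ fun j _ => posSemidef_vecMulVec_self_star _

/-- 0-based indices. -/
theorem stmt_14 (d m : ℕ) (hd : 2 ≤ d) (hm : 1 ≤ m)
    (S : Matrix (Fin (d + m)) (Fin (d + m)) ℂ)
    (hS : S = ∑ k : Fin (d + 1), outer (stdVec (d + m) (((k : ℕ) + 1) % (d + 1)))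
      (stdVec (d + m) (k : ℕ))) :
    (∑ i : Fin (d + 1), ∑ r : Fin d, ∑ s : Fin d,
      (outer (stdVec d (s : ℕ)) (stdVec d (r : ℕ))) ⊗ₖ
        (outer (stdVec (d + m) (((r : ℕ) + (i : ℕ)) % (d + 1)))
          (stdVec (d + m) (((s : ℕ) + (i : ℕ)) % (d + 1))))).PosSemidef :=
  stmt_14_general d m
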